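/- arXiv:1008.0627 — 2 statements merged into one kernel-verified Lean document; each statement's English description precedes it below -/
import Mathlib

section
/- If f : ℝ → ℂ is continuously differentiable with f, f' ∈ L²(ℝ), and δ > 0, then the L² norm of the local oscillation satisfies ‖M^δ f‖_{L²} ≤ √2 · δ · ‖f'‖_{L²}. -/
/-!
By the fundamental theorem of calculus and Cauchy–Schwarz, for `|u| ≤ δ`,
`|f(x+u) - f(x)|² ≤ δ ∫_{-δ}^{δ} |f'(x+s)|² ds`, and the right-hand side does not depend on `u`,
so it also bounds `(M^δ f(x))²`. Integrating in `x` and exchanging the integrals (Tonelli and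
translation invariance of Lebesgue measure) gives `‖M^δ f‖₂² ≤ δ · 2δ · ‖f'‖₂²`.
-/

open MeasureTheory Set
open scoped ENNReal Interval

theorem ENNReal.ofReal_iSup_le_iSup_ofReal {ι : Sort*} (r : ι → ℝ) :
    ENNReal.ofReal (⨆ i, r i) ≤ ⨆ i, ENNReal.ofReal (r i) := by
  rcases eq_or_ne (⨆ i, ENNReal.ofReal (r i)) ∞ with htop | htop
  · simp [htop]
  refine ENNReal.ofReal_le_of_le_toReal (Real.iSup_le (fun i => ?_) ENNReal.toReal_nonneg)
  exact (ENNReal.ofReal_le_iff_le_toReal htop).1 (le_iSup (fun i => ENNReal.ofReal (r i)) i)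

theorem eLpNorm_two_sq_eq_lintegral {α E : Type*} [MeasurableSpace α] [NormedAddCommGroup E]
    (μ : Measure α) (f : α → E) :
    eLpNorm f 2 μ ^ 2 = ∫⁻ x, ‖f x‖ₑ ^ 2 ∂μ := by
  simpa using eLpNorm_nnreal_pow_eq_lintegral (f := f) (μ := μ) (p := 2) two_ne_zero

theorem sq_lintegral_le_measure_univ_mul_lintegral_sq {α : Type*} [MeasurableSpace α]
    {μ : Measure α} {g : α → ℝ≥0∞} (hg : AEMeasurable g μ) :
    (∫⁻ x, g x ∂μ) ^ 2 ≤ μ univ * ∫⁻ x, g x ^ 2 ∂μ := by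
  have hCS := ENNReal.lintegral_mul_le_Lp_mul_Lq μ Real.HolderConjugate.two_two
    aemeasurable_const hg (f := fun _ => 1)
  simp only [Pi.mul_apply, one_mul, one_pow, lintegral_const, ENNReal.rpow_two] at hCS
  calc (∫⁻ x, g x ∂μ) ^ 2
      ≤ ((μ univ) ^ (1 / 2 : ℝ) * (∫⁻ x, g x ^ 2 ∂μ) ^ (1 / 2 : ℝ)) ^ 2 := by gcongr
    _ = μ univ * ∫⁻ x, g x ^ 2 ∂μ := by
      rw [← ENNReal.mul_rpow_of_nonneg _ _ (by norm_num), ← ENNReal.rpow_natCast,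
        ← ENNReal.rpow_mul]
      norm_num

theorem lintegral_setLIntegral_comp_add {G : Type*} [MeasurableSpace G] [AddGroup G]
    [MeasurableAdd₂ G] {μ : Measure G} [SFinite μ] [μ.IsAddRightInvariant]
    {g : G → ℝ≥0∞} (hg : Measurable g) (S : Set G) :
    ∫⁻ x, ∫⁻ s in S, g (x + s) ∂μ ∂μ = μ S * ∫⁻ x, g x ∂μ := by
  rw [lintegral_lintegral_swap (f := fun x s => g (x + s))
    (hg.comp measurable_add).aemeasurable]
  simp only [lintegral_add_right_eq_self (μ := μ) g, setLIntegral_const, mul_comm]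

/-- The local oscillation `M^δ f`. -/
noncomputable def localOscillation {E : Type*} [NormedAddCommGroup E] (f : ℝ → E) (δ : ℝ)
    (x : ℝ) : ℝ :=
  ⨆ u : Icc (-δ) δ, ‖f (x + u) - f x‖

section Oscillation

variable {E : Type*} [NormedAddCommGroup E] [NormedSpace ℝ E] [CompleteSpace E]
  {f : ℝ → E} {δ : ℝ}

theorem enorm_sub_sq_le_of_abs_le (hf : ContDiff ℝ 1 f) (x : ℝ) {u : ℝ} (hu : |u| ≤ δ) :
    ‖f (x + u) - f x‖ₑ ^ 2 ≤ ENNReal.ofReal δ * ∫⁻ s in Icc (-δ) δ, ‖deriv f (x + s)‖ₑ ^ 2 := by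
  have hdf : Continuous (deriv f) := hf.continuous_deriv le_rfl
  have hFTC : f (x + u) - f x = ∫ s in (0)..u, deriv f (x + s) := by
    rw [intervalIntegral.integral_comp_add_left, add_zero,
      intervalIntegral.integral_deriv_eq_sub (fun t _ => hf.differentiable one_ne_zero t)
        (hdf.intervalIntegrable _ _)]
  have hsub : Ι 0 u ⊆ Icc (-δ) δ := fun s hs => by
    rcases hs with ⟨h1, h2⟩
    constructor <;> cases le_total u 0 <;> simp_all [abs_le] <;> linarith
  calc ‖f (x + u) - f x‖ₑ ^ 2 = ‖∫ s in Ι 0 u, deriv f (x + s)‖ₑ ^ 2 := by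
        rw [hFTC, ← ofReal_norm, intervalIntegral.norm_integral_eq_norm_integral_uIoc,
          ofReal_norm]
    _ ≤ (∫⁻ s in Ι 0 u, ‖deriv f (x + s)‖ₑ) ^ 2 := by
        gcongr; exact enorm_integral_le_lintegral_enorm _
    _ ≤ volume (Ι 0 u) * ∫⁻ s in Ι 0 u, ‖deriv f (x + s)‖ₑ ^ 2 := by
        simpa using sq_lintegral_le_measure_univ_mul_lintegral_sq
          (μ := volume.restrict (Ι 0 u)) (by fun_prop)
    _ ≤ ENNReal.ofReal δ * ∫⁻ s in Icc (-δ) δ, ‖deriv f (x + s)‖ₑ ^ 2 := by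
        rw [Real.volume_uIoc, sub_zero]
        gcongr

theorem enorm_localOscillation_sq_le (hf : ContDiff ℝ 1 f) (x : ℝ) :
    ‖localOscillation f δ x‖ₑ ^ 2
      ≤ ENNReal.ofReal δ * ∫⁻ s in Icc (-δ) δ, ‖deriv f (x + s)‖ₑ ^ 2 := by
  rw [localOscillation, Real.enorm_eq_ofReal (Real.iSup_nonneg fun _ => norm_nonneg _)]
  calc ENNReal.ofReal (⨆ u : Icc (-δ) δ, ‖f (x + u) - f x‖) ^ 2
      ≤ (⨆ u : Icc (-δ) δ, ‖f (x + u) - f x‖ₑ) ^ 2 := by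
        simp only [← ofReal_norm]
        gcongr
        exact ENNReal.ofReal_iSup_le_iSup_ofReal _
    _ ≤ _ := by
        rw [ENNReal.iSup_pow_of_ne_zero two_ne_zero]
        exact iSup_le fun ⟨u, hu⟩ => enorm_sub_sq_le_of_abs_le hf x (abs_le.2 hu)

end Oscillation

theorem stmt1_general (f : ℝ → ℂ) (hf : ContDiff ℝ 1 f)
    (δ : ℝ) (hδ : 0 < δ) :
    eLpNorm (fun x => ⨆ u : Set.Icc (-δ) δ, ‖f (x + (u : ℝ)) - f x‖) 2 volume
      ≤ ENNReal.ofReal (Real.sqrt 2 * δ) * eLpNorm (deriv f) 2 volume := by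
  have hg : Measurable fun t => ‖deriv f t‖ₑ ^ 2 :=
    (hf.continuous_deriv le_rfl).enorm.measurable.pow_const 2
  have hconst : ENNReal.ofReal δ * volume (Icc (-δ) δ) = ENNReal.ofReal (Real.sqrt 2 * δ) ^ 2 := by
    rw [Real.volume_Icc, ← ENNReal.ofReal_mul hδ.le, ← ENNReal.ofReal_pow (by positivity),
      mul_pow, Real.sq_sqrt zero_le_two]
    ring_nf
  rw [← ENNReal.pow_le_pow_left_iff two_ne_zero, mul_pow, eLpNorm_two_sq_eq_lintegral,
    eLpNorm_two_sq_eq_lintegral]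
  calc ∫⁻ x, ‖localOscillation f δ x‖ₑ ^ 2
      ≤ ∫⁻ x, ENNReal.ofReal δ * ∫⁻ s in Icc (-δ) δ, ‖deriv f (x + s)‖ₑ ^ 2 :=
        lintegral_mono fun x => enorm_localOscillation_sq_le hf x
    _ = ENNReal.ofReal (Real.sqrt 2 * δ) ^ 2 * ∫⁻ t, ‖deriv f t‖ₑ ^ 2 := by
        rw [lintegral_const_mul' _ _ ENNReal.ofReal_ne_top, lintegral_setLIntegral_comp_add hg,
          ← mul_assoc, hconst]

/-- If `f : ℝ → ℂ` is continuously differentiable with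
`f, f' ∈ L²(ℝ)` and `δ > 0`, then the `L²` norm of the local oscillation
`M^δ f(x) = sup_{|u| ≤ δ} |f(x+u) − f(x)|` satisfies
`‖M^δ f‖_{L²} ≤ √2 · δ · ‖f'‖_{L²}`. -/
theorem stmt1 (f : ℝ → ℂ) (hf : ContDiff ℝ 1 f)
    (hf2 : MemLp f 2 (volume : Measure ℝ))
    (hf' : MemLp (deriv f) 2 (volume : Measure ℝ))
    (δ : ℝ) (hδ : 0 < δ) :
    eLpNorm (fun x => ⨆ u : Set.Icc (-δ) δ, ‖f (x + (u : ℝ)) - f x‖) 2 volume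
      ≤ ENNReal.ofReal (Real.sqrt 2 * δ) * eLpNorm (deriv f) 2 volume :=
  stmt1_general f hf δ hδ
end

section
/- Let G be the ax+b group with left Haar measure da db/a², let ε > 0, U_ε = {e^{t₁X₁}e^{t₂X₂} : |t_i| < ε}, points x_i with G ⊆ ⋃ x_iU_ε, and disjoint sets U_i ⊆ x_iU_ε with ⋃U_i = G. If f ∈ L²(G) is right differentiable up to order 2 with R^α f ∈ L²(G) for |α| ≤ 2, then ‖f − Σ_i f(x_i)1_{U_i}‖_{L²} ≤ C_ε (‖X₁f‖_{L²} + ‖X₂f‖_{L²} + ‖X₂X₁f‖_{L²}), where C_ε → 0 as ε → 0. -/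
open MeasureTheory Filter Topology
open Set
open scoped ENNReal NNReal
set_option maxHeartbeats 1000000

/-- Multiplication of the `ax+b` group, realized on pairs `(a,b)`. -/
def gmul (p q : ℝ × ℝ) : ℝ × ℝ := (p.1 * q.1, p.1 * q.2 + p.2)

/-- Left Haar measure `da db / a²` of the `ax+b` group. -/
noncomputable def haarAxB : Measure (ℝ × ℝ) :=
  ((volume : Measure (ℝ × ℝ)).restrict {p | 0 < p.1}).withDensity
    (fun p => ENNReal.ofReal (1 / p.1 ^ 2))

/-- Right derivative in the dilation direction `X₁`. -/
noncomputable def Rd1 (f : ℝ × ℝ → ℂ) (p : ℝ × ℝ) : ℂ :=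
  deriv (fun t : ℝ => f (gmul p (Real.exp t, 0))) 0

/-- Right derivative in the translation direction `X₂`. -/
noncomputable def Rd2 (f : ℝ × ℝ → ℂ) (p : ℝ × ℝ) : ℂ :=
  deriv (fun t : ℝ => f (gmul p (1, t))) 0

/-- The neighborhood `U_ε = {e^{t₁X₁}e^{t₂X₂} : |t₁|,|t₂| < ε}` of the identity. -/
def UsetAxB (ε : ℝ) : Set (ℝ × ℝ) :=
  {q | ∃ t₁ t₂ : ℝ, |t₁| < ε ∧ |t₂| < ε ∧ q = gmul (Real.exp t₁, 0) (1, t₂)}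

/-!
For `p = x e^{t₁X₁} e^{t₂X₂}` with `|tᵢ| < ε`, go from `p` to `q = p e^{-t₂X₂}` along `X₂` and
from `q` to `x` along `X₁`: the fundamental theorem of calculus bounds `|f p - f x|` by integrals
of `|X₂f|` over `p e^{sX₂}` and of `|X₁f|` over `q e^{uX₁}`. Since
`q e^{uX₁} = p e^{uX₁} e^{-e^{-u}t₂X₂}`, one more application moves the second integral to
`p e^{uX₁}`, at the cost of an integral of `|X₂X₁f|` over `p e^{uX₁}e^{vX₂}`, `|v| ≤ εe^ε`.
Each of the three majorants is an average of right translates of some `|X^α f|` over a parameter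
box of measure `O(ε)`; right translation by `(a, b)` scales `L^p(G)` norms by `a^{1/p}`, so by
Hölder and Tonelli the `L²` norm of each majorant is `O(ε)` times `‖X^α f‖₂`.
-/

open Set
open scoped ENNReal

noncomputable def expX₁ (t : ℝ) : ℝ × ℝ := (Real.exp t, 0)

def expX₂ (t : ℝ) : ℝ × ℝ := (1, t)

lemma gmul_assoc (p q r : ℝ × ℝ) : gmul (gmul p q) r = gmul p (gmul q r) := by
  simp only [gmul, Prod.mk.injEq]
  constructor <;> ring

lemma gmul_expX₂_expX₁ (s t : ℝ) :
    gmul (expX₂ s) (expX₁ t) = gmul (expX₁ t) (expX₂ (Real.exp (-t) * s)) := by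
  simp only [gmul, expX₁, expX₂, Real.exp_neg, Prod.mk.injEq]
  field_simp
  simp

@[simp]
lemma gmul_expX₁_zero (p : ℝ × ℝ) : gmul p (expX₁ 0) = p := by
  simp [gmul, expX₁]

@[simp]
lemma gmul_expX₂_zero (p : ℝ × ℝ) : gmul p (expX₂ 0) = p := by
  simp [gmul, expX₂]

@[fun_prop]
lemma Continuous.gmul {α : Type*} [TopologicalSpace α] {f g : α → ℝ × ℝ}
    (hf : Continuous f) (hg : Continuous g) : Continuous fun x => gmul (f x) (g x) := by
  unfold _root_.gmul
  fun_prop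

@[fun_prop]
lemma Measurable.gmul {α : Type*} [MeasurableSpace α] {f g : α → ℝ × ℝ}
    (hf : Measurable f) (hg : Measurable g) : Measurable fun x => gmul (f x) (g x) := by
  unfold _root_.gmul
  fun_prop

@[fun_prop]
lemma continuous_expX₁ : Continuous expX₁ := by
  unfold expX₁
  fun_prop

@[fun_prop]
lemma continuous_expX₂ : Continuous expX₂ := by
  unfold expX₂
  fun_prop

@[fun_prop]
lemma measurable_expX₁ : Measurable expX₁ := continuous_expX₁.measurable

@[fun_prop]
lemma measurable_expX₂ : Measurable expX₂ := continuous_expX₂.measurable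

instance : SFinite haarAxB := by
  unfold haarAxB
  infer_instance

lemma ae_haarAxB_fst_pos : ∀ᵐ p ∂haarAxB, 0 < p.1 := by
  have hS : MeasurableSet {p : ℝ × ℝ | 0 < p.1} := measurable_fst measurableSet_Ioi
  rw [haarAxB, ae_withDensity_iff (by fun_prop)]
  exact ae_restrict_of_forall_mem hS fun p hp _ => hp

lemma lintegral_haarAxB {h : ℝ × ℝ → ℝ≥0∞} (hh : Measurable h) :
    ∫⁻ p, h p ∂haarAxB
      = ∫⁻ a in Ioi 0, (∫⁻ b, h (a, b)) * ENNReal.ofReal (1 / a ^ 2) := by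
  have hS : {p : ℝ × ℝ | 0 < p.1} = Ioi (0 : ℝ) ×ˢ univ := by
    ext p
    simp
  rw [haarAxB, lintegral_withDensity_eq_lintegral_mul _ (by fun_prop) hh, hS,
    Measure.volume_eq_prod, setLIntegral_prod _ (by fun_prop)]
  refine setLIntegral_congr_fun measurableSet_Ioi fun a _ => ?_
  simp only [Measure.restrict_univ, Pi.mul_apply]
  rw [lintegral_const_mul' _ _ ENNReal.ofReal_ne_top, mul_comm]

lemma setLIntegral_Ioi_comp_mul_left_mul_one_div_sq (F : ℝ → ℝ≥0∞) {c : ℝ} (hc : 0 < c) :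
    ∫⁻ a in Ioi 0, F (c * a) * ENNReal.ofReal (1 / a ^ 2)
      = ENNReal.ofReal c * ∫⁻ a in Ioi 0, F a * ENNReal.ofReal (1 / a ^ 2) := by
  have himage : (c * ·) '' Ioi (0 : ℝ) = Ioi 0 := by
    simp [image_const_mul_Ioi_zero hc]
  have hchange := lintegral_image_eq_lintegral_abs_deriv_mul (measurableSet_Ioi (a := 0))
    (fun a _ => (hasDerivAt_const_mul c).hasDerivWithinAt) (mul_right_injective₀ hc.ne').injOn
    (fun a => F a * ENNReal.ofReal (1 / a ^ 2))
  rw [himage] at hchange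
  rw [hchange, ← lintegral_const_mul' _ _ ENNReal.ofReal_ne_top]
  refine setLIntegral_congr_fun measurableSet_Ioi fun a ha => ?_
  have ha : 0 < a := ha
  rw [abs_of_pos hc, ← mul_assoc, ← mul_assoc, mul_comm _ (F _), mul_assoc,
    ← ENNReal.ofReal_mul hc.le, ← ENNReal.ofReal_mul (by positivity)]
  congr 2
  field_simp

lemma lintegral_haarAxB_comp_gmul_right {h : ℝ × ℝ → ℝ≥0∞} (hh : Measurable h)
    {q : ℝ × ℝ} (hq : 0 < q.1) :
    ∫⁻ p, h (gmul p q) ∂haarAxB = ENNReal.ofReal q.1 * ∫⁻ p, h p ∂haarAxB := by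
  have hhq : Measurable fun p => h (gmul p q) := hh.comp (by fun_prop)
  rw [lintegral_haarAxB hhq, lintegral_haarAxB hh,
    ← setLIntegral_Ioi_comp_mul_left_mul_one_div_sq _ hq]
  refine setLIntegral_congr_fun measurableSet_Ioi fun a _ => ?_
  congr 1
  simp only [gmul]
  rw [mul_comm q.1 a]
  exact lintegral_add_left_eq_self (fun b => h (a * q.1, b)) (a * q.2)

section Minkowski

variable {α β : Type*} [MeasurableSpace α] [MeasurableSpace β] {μ : Measure α} {ν : Measure β}

lemma lintegral_rpow_le_measure_univ_mul {q : ℝ} (hq : 1 ≤ q) {g : β → ℝ≥0∞}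
    (hg : AEMeasurable g ν) :
    (∫⁻ y, g y ∂ν) ^ q ≤ ν univ ^ (q - 1) * ∫⁻ y, g y ^ q ∂ν := by
  have hq0 : 0 < q := by linarith
  have hHolder := eLpNorm_le_eLpNorm_mul_rpow_measure_univ (ENNReal.one_le_ofReal.2 hq)
    hg.aestronglyMeasurable
  rw [eLpNorm_one_eq_lintegral_enorm, eLpNorm_eq_lintegral_rpow_enorm_toReal
    (ENNReal.ofReal_pos.2 hq0).ne' ENNReal.ofReal_ne_top, ENNReal.toReal_ofReal hq0.le] at hHolder
  simp only [enorm_eq_self, ENNReal.toReal_one] at hHolder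
  calc (∫⁻ y, g y ∂ν) ^ q
      ≤ ((∫⁻ y, g y ^ q ∂ν) ^ (1 / q) * ν univ ^ (1 / 1 - 1 / q)) ^ q := by gcongr
    _ = ν univ ^ (q - 1) * ∫⁻ y, g y ^ q ∂ν := by
      rw [ENNReal.mul_rpow_of_nonneg _ _ hq0.le, ← ENNReal.rpow_mul, ← ENNReal.rpow_mul,
        one_div_mul_cancel hq0.ne', ENNReal.rpow_one, mul_comm]
      congr 2
      field_simp

variable [SFinite μ] [IsFiniteMeasure ν]

/-- A weak Minkowski integral inequality, from Hölder's inequality in `y` and Tonelli. -/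
lemma eLpNorm_lintegral_le {p : ℝ≥0∞} (hp1 : 1 ≤ p) (hp : p ≠ ∞) {F : α → β → ℝ≥0∞}
    (hF : Measurable (Function.uncurry F)) {B : ℝ≥0∞}
    (hB : ∀ᵐ y ∂ν, eLpNorm (F · y) p μ ≤ B) :
    eLpNorm (fun x => ∫⁻ y, F x y ∂ν) p μ ≤ ν univ * B := by
  have hp0 : p ≠ 0 := (zero_lt_one.trans_le hp1).ne'
  simp only [eLpNorm_eq_lintegral_rpow_enorm_toReal hp0 hp, enorm_eq_self] at hB ⊢
  set q := p.toReal
  have hq : 1 ≤ q := by simpa using ENNReal.toReal_mono hp hp1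
  have hq0 : 0 < q := by linarith
  have hBq : ∀ᵐ y ∂ν, ∫⁻ x, F x y ^ q ∂μ ≤ B ^ q := by
    filter_upwards [hB] with y hy
    simpa [← ENNReal.rpow_mul, inv_mul_cancel₀ hq0.ne'] using ENNReal.rpow_le_rpow hy hq0.le
  have hFq : Measurable (Function.uncurry fun x y => F x y ^ q) := hF.pow_const q
  have hFq' : Measurable fun x => ∫⁻ y, F x y ^ q ∂ν := hFq.lintegral_prod_right'
  calc (∫⁻ x, (∫⁻ y, F x y ∂ν) ^ q ∂μ) ^ (1 / q)
      ≤ (ν univ ^ (q - 1) * ∫⁻ y, ∫⁻ x, F x y ^ q ∂μ ∂ν) ^ (1 / q) := by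
        rw [← lintegral_lintegral_swap hFq.aemeasurable, ← lintegral_const_mul _ hFq']
        gcongr with x
        exact lintegral_rpow_le_measure_univ_mul hq (hF.comp measurable_prodMk_left).aemeasurable
    _ ≤ (ν univ ^ (q - 1) * (ν univ * B ^ q)) ^ (1 / q) := by
        gcongr
        simpa [mul_comm] using lintegral_mono_ae hBq
    _ = ν univ * B := by
        nth_rw 2 [← ENNReal.rpow_one (ν univ)]
        rw [← mul_assoc, ← ENNReal.rpow_add_of_nonneg _ _ (by linarith) zero_le_one, sub_add_cancel,
          ← ENNReal.mul_rpow_of_nonneg _ _ hq0.le, ← ENNReal.rpow_mul,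
          mul_one_div_cancel hq0.ne', ENNReal.rpow_one]

end Minkowski

section Translation

variable {E : Type*} [NormedAddCommGroup E] {g : ℝ × ℝ → E} {p : ℝ≥0∞}

lemma eLpNorm_comp_gmul_right (hg : StronglyMeasurable g) (hp0 : p ≠ 0) (hp : p ≠ ∞)
    {q : ℝ × ℝ} (hq : 0 < q.1) :
    eLpNorm (fun x => g (gmul x q)) p haarAxB
      = ENNReal.ofReal q.1 ^ (1 / p.toReal) * eLpNorm g p haarAxB := by
  simp only [eLpNorm_eq_lintegral_rpow_enorm_toReal hp0 hp]
  rw [lintegral_haarAxB_comp_gmul_right (hg.enorm.pow_const _) hq,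
    ENNReal.mul_rpow_of_nonneg _ _ (by positivity)]

lemma measurable_lintegral_enorm_comp_gmul {β : Type*} [MeasurableSpace β] {ν : Measure β}
    [SFinite ν] (hg : StronglyMeasurable g) {φ : β → ℝ × ℝ} (hφ : Measurable φ) :
    Measurable fun x => ∫⁻ y, ‖g (gmul x (φ y))‖ₑ ∂ν :=
  (hg.enorm.comp (measurable_fst.gmul (hφ.comp measurable_snd))).lintegral_prod_right'

lemma eLpNorm_lintegral_enorm_comp_gmul_le {β : Type*} [MeasurableSpace β] {ν : Measure β}
    [IsFiniteMeasure ν] (hg : StronglyMeasurable g) (hp1 : 1 ≤ p) (hp : p ≠ ∞)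
    {φ : β → ℝ × ℝ} (hφ : Measurable φ) (hφ0 : ∀ y, 0 < (φ y).1) {M : ℝ}
    (hM : ∀ᵐ y ∂ν, (φ y).1 ≤ M) :
    eLpNorm (fun x => ∫⁻ y, ‖g (gmul x (φ y))‖ₑ ∂ν) p haarAxB
      ≤ ν univ * (ENNReal.ofReal M ^ (1 / p.toReal) * eLpNorm g p haarAxB) := by
  have hp0 : p ≠ 0 := (zero_lt_one.trans_le hp1).ne'
  have hF : Measurable (Function.uncurry fun x y => ‖g (gmul x (φ y))‖ₑ) :=
    hg.enorm.comp (measurable_fst.gmul (hφ.comp measurable_snd))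
  refine eLpNorm_lintegral_le hp1 hp hF ?_
  filter_upwards [hM] with y hy
  rw [eLpNorm_enorm, eLpNorm_comp_gmul_right hg hp0 hp (hφ0 y)]
  gcongr

lemma rpow_one_div_toReal_le_self {x : ℝ≥0∞} (hx : 1 ≤ x) (hp1 : 1 ≤ p) :
    x ^ (1 / p.toReal) ≤ x := by
  refine (ENNReal.rpow_le_rpow_of_exponent_le hx ?_).trans_eq (ENNReal.rpow_one x)
  rcases eq_or_ne p ∞ with rfl | hp
  · simp
  exact div_le_one_of_le₀ (by simpa using ENNReal.toReal_mono hp hp1) ENNReal.toReal_nonneg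

lemma eLpNorm_setLIntegral_comp_expX₂_le (hg : StronglyMeasurable g) (hp1 : 1 ≤ p) (hp : p ≠ ∞)
    (ε : ℝ) :
    eLpNorm (fun x => ∫⁻ s in Icc (-ε) ε, ‖g (gmul x (expX₂ s))‖ₑ) p haarAxB
      ≤ ENNReal.ofReal (2 * ε) * eLpNorm g p haarAxB := by
  refine (eLpNorm_lintegral_enorm_comp_gmul_le hg hp1 hp measurable_expX₂
    (fun _ => one_pos) (M := 1) (ae_of_all _ fun _ => le_rfl)).trans_eq ?_
  rw [ENNReal.ofReal_one, ENNReal.one_rpow, one_mul, Measure.restrict_apply_univ,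
    Real.volume_Icc, sub_neg_eq_add, two_mul]

lemma eLpNorm_setLIntegral_comp_expX₁_le (hg : StronglyMeasurable g) (hp1 : 1 ≤ p) (hp : p ≠ ∞)
    {ε : ℝ} (hε : 0 ≤ ε) :
    eLpNorm (fun x => ∫⁻ u in Icc (-ε) ε, ‖g (gmul x (expX₁ u))‖ₑ) p haarAxB
      ≤ ENNReal.ofReal (2 * ε * Real.exp ε) * eLpNorm g p haarAxB := by
  refine (eLpNorm_lintegral_enorm_comp_gmul_le hg hp1 hp measurable_expX₁
    (fun u => Real.exp_pos u) (M := Real.exp ε) ?_).trans ?_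
  · filter_upwards [ae_restrict_mem measurableSet_Icc] with u hu
    exact Real.exp_le_exp.2 hu.2
  rw [Measure.restrict_apply_univ, Real.volume_Icc, sub_neg_eq_add, ← two_mul, ← mul_assoc,
    ENNReal.ofReal_mul (p := 2 * ε) (by positivity)]
  gcongr
  exact rpow_one_div_toReal_le_self (ENNReal.one_le_ofReal.2 (Real.one_le_exp hε)) hp1

lemma eLpNorm_setLIntegral_comp_expX₁_expX₂_le (hg : StronglyMeasurable g) (hp1 : 1 ≤ p)
    (hp : p ≠ ∞) {ε δ : ℝ} (hε : 0 ≤ ε) (hδ : 0 ≤ δ) :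
    eLpNorm (fun x => ∫⁻ w in Icc (-ε) ε ×ˢ Icc (-δ) δ,
        ‖g (gmul x (gmul (expX₁ w.1) (expX₂ w.2)))‖ₑ) p haarAxB
      ≤ ENNReal.ofReal (2 * ε * (2 * δ) * Real.exp ε) * eLpNorm g p haarAxB := by
  have : IsFiniteMeasure (volume.restrict (Icc (-ε) ε ×ˢ Icc (-δ) δ)) :=
    isFiniteMeasure_restrict.2 (isCompact_Icc.prod isCompact_Icc).measure_lt_top.ne
  refine (eLpNorm_lintegral_enorm_comp_gmul_le hg hp1 hp (by fun_prop)
    (fun w => by simp [gmul, expX₁, expX₂, Real.exp_pos]) (M := Real.exp ε) ?_).trans ?_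
  · filter_upwards [ae_restrict_mem (measurableSet_Icc.prod measurableSet_Icc)] with w hw
    simpa [gmul, expX₁, expX₂] using hw.1.2
  simp only [Measure.restrict_apply_univ, Measure.volume_eq_prod, Measure.prod_prod,
    Real.volume_Icc, sub_neg_eq_add, ← two_mul]
  rw [← mul_assoc, ENNReal.ofReal_mul (p := 2 * ε * (2 * δ)) (by positivity),
    ENNReal.ofReal_mul (p := 2 * ε) (by positivity)]
  gcongr
  exact rpow_one_div_toReal_le_self (ENNReal.one_le_ofReal.2 (Real.one_le_exp hε)) hp1

end Translation

lemma enorm_sub_le_setLIntegral_Icc {E : Type*} [NormedAddCommGroup E] [NormedSpace ℝ E]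
    {F F' : ℝ → E} (hF : ∀ s, HasDerivAt F (F' s) s) (hF' : Continuous F') {t r : ℝ}
    (ht : |t| ≤ r) :
    ‖F t - F 0‖ₑ ≤ ∫⁻ s in Icc (-r) r, ‖F' s‖ₑ := by
  have hderiv : deriv F = F' := funext fun s => (hF s).deriv
  have hC1 : ContDiff ℝ 1 F :=
    contDiff_one_iff_deriv.2 ⟨fun s => (hF s).differentiableAt, hderiv ▸ hF'⟩
  obtain ⟨hrt, htr⟩ := abs_le.1 ht
  rcases le_total 0 t with h | h
  · calc ‖F t - F 0‖ₑ ≤ ∫⁻ s in Icc 0 t, ‖deriv F s‖ₑ :=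
          enorm_sub_le_lintegral_deriv_of_contDiffOn_Icc hC1.contDiffOn h
      _ ≤ ∫⁻ s in Icc (-r) r, ‖F' s‖ₑ := by
          rw [hderiv]
          exact lintegral_mono_set (Icc_subset_Icc (by linarith) htr)
  · calc ‖F t - F 0‖ₑ = ‖F 0 - F t‖ₑ := enorm_sub_rev _ _
      _ ≤ ∫⁻ s in Icc t 0, ‖deriv F s‖ₑ :=
          enorm_sub_le_lintegral_deriv_of_contDiffOn_Icc hC1.contDiffOn h
      _ ≤ ∫⁻ s in Icc (-r) r, ‖F' s‖ₑ := by
          rw [hderiv]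
          exact lintegral_mono_set (Icc_subset_Icc hrt (by linarith))

lemma enorm_le_enorm_add_setLIntegral_Icc {E : Type*} [NormedAddCommGroup E] [NormedSpace ℝ E]
    {F F' : ℝ → E} (hF : ∀ s, HasDerivAt F (F' s) s) (hF' : Continuous F') {t r : ℝ}
    (ht : |t| ≤ r) :
    ‖F t‖ₑ ≤ ‖F 0‖ₑ + ∫⁻ s in Icc (-r) r, ‖F' s‖ₑ :=
  calc ‖F t‖ₑ ≤ ‖F 0‖ₑ + ‖F t - F 0‖ₑ := by
        simpa [add_comm, edist_eq_enorm_sub] using edist_triangle (F t) (F 0) 0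
    _ ≤ ‖F 0‖ₑ + ∫⁻ s in Icc (-r) r, ‖F' s‖ₑ := by
        gcongr
        exact enorm_sub_le_setLIntegral_Icc hF hF' ht

section Oscillation

variable {E : Type*} [NormedAddCommGroup E]

/-- The third integral comes from commuting `e^{t₂X₂}` past `e^{uX₁}`, which rescales `t₂` by
`e^{-u} ≤ e^ε`; hence the width `ε e^ε` of its `X₂`-interval. -/
noncomputable def oscMajorant (D₁ D₂ D₂₁ : ℝ × ℝ → E) (ε : ℝ) (p : ℝ × ℝ) : ℝ≥0∞ :=
  (∫⁻ s in Icc (-ε) ε, ‖D₂ (gmul p (expX₂ s))‖ₑ)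
    + (∫⁻ u in Icc (-ε) ε, ‖D₁ (gmul p (expX₁ u))‖ₑ)
    + ∫⁻ w in Icc (-ε) ε ×ˢ Icc (-(ε * Real.exp ε)) (ε * Real.exp ε),
        ‖D₂₁ (gmul p (gmul (expX₁ w.1) (expX₂ w.2)))‖ₑ

lemma enorm_comp_gmul_expX₂_expX₁_le [NormedSpace ℝ E] {D₁ D₂₁ : ℝ × ℝ → E}
    (hD₂₁ : ∀ p s, HasDerivAt (fun t => D₁ (gmul p (expX₂ t))) (D₂₁ (gmul p (expX₂ s))) s)
    (hc₂₁ : Continuous D₂₁) {ε t u : ℝ} (ht : |t| ≤ ε) (hu : -ε ≤ u) (p : ℝ × ℝ) :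
    ‖D₁ (gmul (gmul p (expX₂ t)) (expX₁ u))‖ₑ
      ≤ ‖D₁ (gmul p (expX₁ u))‖ₑ + ∫⁻ v in Icc (-(ε * Real.exp ε)) (ε * Real.exp ε),
          ‖D₂₁ (gmul p (gmul (expX₁ u) (expX₂ v)))‖ₑ := by
  have hr : |Real.exp (-u) * t| ≤ ε * Real.exp ε := by
    rw [abs_mul, Real.abs_exp, mul_comm]
    exact mul_le_mul ht (Real.exp_le_exp.2 (by linarith)) (by positivity)
      ((abs_nonneg _).trans ht)
  simpa [gmul_assoc, gmul_expX₂_expX₁] using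
    enorm_le_enorm_add_setLIntegral_Icc (hD₂₁ (gmul p (expX₁ u))) (hc₂₁.comp (by fun_prop)) hr

lemma enorm_sub_le_oscMajorant [NormedSpace ℝ E] {f D₁ D₂ D₂₁ : ℝ × ℝ → E}
    (hD₁ : ∀ p s, HasDerivAt (fun t => f (gmul p (expX₁ t))) (D₁ (gmul p (expX₁ s))) s)
    (hD₂ : ∀ p s, HasDerivAt (fun t => f (gmul p (expX₂ t))) (D₂ (gmul p (expX₂ s))) s)
    (hD₂₁ : ∀ p s, HasDerivAt (fun t => D₁ (gmul p (expX₂ t))) (D₂₁ (gmul p (expX₂ s))) s)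
    (hc₁ : Continuous D₁) (hc₂ : Continuous D₂) (hc₂₁ : Continuous D₂₁)
    {ε t₁ t₂ : ℝ} (h₁ : |t₁| ≤ ε) (h₂ : |t₂| ≤ ε) {z p : ℝ × ℝ}
    (hp : gmul z (gmul (expX₁ t₁) (expX₂ t₂)) = p) :
    ‖f p - f z‖ₑ ≤ oscMajorant D₁ D₂ D₂₁ ε p := by
  set I := Icc (-ε) ε
  set J := Icc (-(ε * Real.exp ε)) (ε * Real.exp ε)
  set q := gmul p (expX₂ (-t₂))
  have hqx : gmul q (expX₁ (-t₁)) = z := by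
    simp [q, ← hp, gmul, expX₁, expX₂, mul_assoc, ← Real.exp_add]
  have hpq : ‖f p - f q‖ₑ ≤ ∫⁻ s in I, ‖D₂ (gmul p (expX₂ s))‖ₑ := by
    rw [enorm_sub_rev]
    simpa using enorm_sub_le_setLIntegral_Icc (hD₂ p)
      (hc₂.comp (by fun_prop)) (t := -t₂) (by rwa [abs_neg])
  have hqz : ‖f q - f z‖ₑ ≤ ∫⁻ u in I, ‖D₁ (gmul q (expX₁ u))‖ₑ := by
    rw [enorm_sub_rev, ← hqx]
    simpa using enorm_sub_le_setLIntegral_Icc (hD₁ q)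
      (hc₁.comp (by fun_prop)) (t := -t₁) (by rwa [abs_neg])
  calc ‖f p - f z‖ₑ ≤ ‖f p - f q‖ₑ + ‖f q - f z‖ₑ := by
        simpa only [edist_eq_enorm_sub] using edist_triangle (f p) (f q) (f z)
    _ ≤ (∫⁻ s in I, ‖D₂ (gmul p (expX₂ s))‖ₑ) + ((∫⁻ u in I, ‖D₁ (gmul p (expX₁ u))‖ₑ)
          + ∫⁻ u in I, ∫⁻ v in J, ‖D₂₁ (gmul p (gmul (expX₁ u) (expX₂ v)))‖ₑ) := by
        refine add_le_add hpq (hqz.trans ?_)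
        have hm : Measurable fun u => ‖D₁ (gmul p (expX₁ u))‖ₑ :=
          (hc₁.comp (by fun_prop)).enorm.measurable
        rw [← lintegral_add_left hm]
        exact setLIntegral_mono' measurableSet_Icc fun u hu =>
          enorm_comp_gmul_expX₂_expX₁_le hD₂₁ hc₂₁ (abs_neg t₂ ▸ h₂) hu.1 p
    _ = oscMajorant D₁ D₂ D₂₁ ε p := by
        have hm : Measurable fun w : ℝ × ℝ => ‖D₂₁ (gmul p (gmul (expX₁ w.1) (expX₂ w.2)))‖ₑ :=
          (hc₂₁.comp (by fun_prop)).enorm.measurable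
        rw [oscMajorant, add_assoc, Measure.volume_eq_prod, setLIntegral_prod _ hm.aemeasurable]

lemma eLpNorm_oscMajorant_le {D₁ D₂ D₂₁ : ℝ × ℝ → E} (h₁ : StronglyMeasurable D₁)
    (h₂ : StronglyMeasurable D₂) (h₂₁ : StronglyMeasurable D₂₁) {p : ℝ≥0∞} (hp1 : 1 ≤ p)
    (hp : p ≠ ∞) {ε : ℝ} (hε : 0 ≤ ε) :
    eLpNorm (oscMajorant D₁ D₂ D₂₁ ε) p haarAxB
      ≤ ENNReal.ofReal (2 * ε * Real.exp ε + (2 * ε * Real.exp ε) ^ 2)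
          * (eLpNorm D₁ p haarAxB + eLpNorm D₂ p haarAxB + eLpNorm D₂₁ p haarAxB) := by
  set I := Icc (-ε) ε
  set J := Icc (-(ε * Real.exp ε)) (ε * Real.exp ε)
  set κ := 2 * ε * Real.exp ε
  have hexp : 1 ≤ Real.exp ε := Real.one_le_exp hε
  have hm₂ := measurable_lintegral_enorm_comp_gmul (ν := volume.restrict I) h₂ measurable_expX₂
  have hm₁ := measurable_lintegral_enorm_comp_gmul (ν := volume.restrict I) h₁ measurable_expX₁
  have hm₂₁ := measurable_lintegral_enorm_comp_gmul (ν := volume.restrict (I ×ˢ J)) h₂₁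
    (φ := fun w => gmul (expX₁ w.1) (expX₂ w.2)) (by fun_prop)
  calc eLpNorm (oscMajorant D₁ D₂ D₂₁ ε) p haarAxB
      ≤ eLpNorm (fun x => ∫⁻ s in I, ‖D₂ (gmul x (expX₂ s))‖ₑ) p haarAxB
        + eLpNorm (fun x => ∫⁻ u in I, ‖D₁ (gmul x (expX₁ u))‖ₑ) p haarAxB
        + eLpNorm (fun x => ∫⁻ w in I ×ˢ J,
            ‖D₂₁ (gmul x (gmul (expX₁ w.1) (expX₂ w.2)))‖ₑ) p haarAxB := by
        refine (eLpNorm_add_le (hm₂.add hm₁).aestronglyMeasurable hm₂₁.aestronglyMeasurable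
          hp1).trans ?_
        gcongr
        exact eLpNorm_add_le hm₂.aestronglyMeasurable hm₁.aestronglyMeasurable hp1
    _ ≤ ENNReal.ofReal (2 * ε) * eLpNorm D₂ p haarAxB
        + ENNReal.ofReal κ * eLpNorm D₁ p haarAxB
        + ENNReal.ofReal (2 * ε * (2 * (ε * Real.exp ε)) * Real.exp ε)
          * eLpNorm D₂₁ p haarAxB :=
        add_le_add (add_le_add (eLpNorm_setLIntegral_comp_expX₂_le h₂ hp1 hp ε)
          (eLpNorm_setLIntegral_comp_expX₁_le h₁ hp1 hp hε))
          (eLpNorm_setLIntegral_comp_expX₁_expX₂_le h₂₁ hp1 hp hε (by positivity))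
    _ ≤ ENNReal.ofReal (κ + κ ^ 2) * eLpNorm D₂ p haarAxB
        + ENNReal.ofReal (κ + κ ^ 2) * eLpNorm D₁ p haarAxB
        + ENNReal.ofReal (κ + κ ^ 2) * eLpNorm D₂₁ p haarAxB := by
        have hκ : 0 ≤ κ := by positivity
        gcongr
        · nlinarith
        · nlinarith
        · exact le_of_eq_of_le (by ring) (le_add_of_nonneg_left hκ)
    _ = _ := by ring

end Oscillation

lemma tsum_indicator_apply_of_mem {α ι M : Type*} [AddCommMonoid M] [TopologicalSpace M]
    {s : ι → Set α} (hs : Pairwise (Function.onFun Disjoint s)) {a : ι → M} {i : ι}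
    {p : α} (hp : p ∈ s i) :
    ∑' j, (s j).indicator (fun _ => a j) p = a i := by
  rw [tsum_eq_single i fun j hji => indicator_of_notMem (disjoint_left.1 (hs hji.symm) hp) _,
    indicator_of_mem hp]

/-- **Lemma 2 for the `ax+b` group.** If `f ∈ L²(G)` is right
differentiable up to order 2 with `R^α f ∈ L²(G)` for `|α| ≤ 2`, points `x_i`
with `G ⊆ ⋃ x_iU_ε` and disjoint sets `U_i ⊆ x_iU_ε` covering `G`, then
`‖f − Σ_i f(x_i)1_{U_i}‖_{L²} ≤ C_ε(‖X₁f‖_{L²} + ‖X₂f‖_{L²} + ‖X₂X₁f‖_{L²})`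
with `C_ε → 0` as `ε → 0`. -/
theorem stmt17 :
    ∃ C : ℝ → ℝ, Tendsto C (𝓝[>] (0:ℝ)) (𝓝 0) ∧
      ∀ (ε : ℝ), 0 < ε →
      ∀ (x : ℕ → ℝ × ℝ) (Us : ℕ → Set (ℝ × ℝ)),
        (∀ i, 0 < (x i).1) →
        (∀ i, MeasurableSet (Us i)) →
        Pairwise (Function.onFun Disjoint Us) →
        (∀ i, Us i ⊆ gmul (x i) '' UsetAxB ε) →
        (⋃ i, Us i) = {p : ℝ × ℝ | 0 < p.1} →
      ∀ f : ℝ × ℝ → ℂ, Continuous f →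
        -- right differentiability of order 2
        (∀ p s, HasDerivAt (fun t : ℝ => f (gmul p (Real.exp t, 0)))
          (Rd1 f (gmul p (Real.exp s, 0))) s) →
        (∀ p s, HasDerivAt (fun t : ℝ => f (gmul p (1, t)))
          (Rd2 f (gmul p (1, s))) s) →
        (∀ p s, HasDerivAt (fun t : ℝ => Rd1 f (gmul p (1, t)))
          (Rd2 (Rd1 f) (gmul p (1, s))) s) →
        Continuous (Rd1 f) → Continuous (Rd2 f) → Continuous (Rd2 (Rd1 f)) →
        -- f and its derivatives up to order 2 lie in L²(G)
        MemLp f 2 haarAxB → MemLp (Rd1 f) 2 haarAxB →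
        MemLp (Rd2 f) 2 haarAxB → MemLp (Rd2 (Rd1 f)) 2 haarAxB →
        eLpNorm (fun p => f p - ∑' i, Set.indicator (Us i) (fun _ => f (x i)) p)
            2 haarAxB
          ≤ ENNReal.ofReal (C ε) *
              (eLpNorm (Rd1 f) 2 haarAxB + eLpNorm (Rd2 f) 2 haarAxB +
                eLpNorm (Rd2 (Rd1 f)) 2 haarAxB) := by
  refine ⟨fun ε => 2 * ε * Real.exp ε + (2 * ε * Real.exp ε) ^ 2, ?_, ?_⟩
  · have hC : Continuous fun ε : ℝ => 2 * ε * Real.exp ε + (2 * ε * Real.exp ε) ^ 2 := by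
      fun_prop
    simpa using (hC.tendsto 0).mono_left nhdsWithin_le_nhds
  intro ε hε x Us _ _ hdisj hsub hcover f _ hd₁ hd₂ hd₂₁ hc₁ hc₂ hc₂₁ _ _ _ _
  have hpt : ∀ᵐ p ∂haarAxB, ‖f p - ∑' i, (Us i).indicator (fun _ => f (x i)) p‖ₑ
      ≤ ‖oscMajorant (Rd1 f) (Rd2 f) (Rd2 (Rd1 f)) ε p‖ₑ := by
    filter_upwards [ae_haarAxB_fst_pos] with p hp
    obtain ⟨i, hi⟩ := mem_iUnion.1 (hcover ▸ hp : p ∈ ⋃ i, Us i)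
    obtain ⟨_, ⟨t₁, t₂, h₁, h₂, rfl⟩, hxp⟩ := hsub i hi
    rw [tsum_indicator_apply_of_mem hdisj hi, enorm_eq_self]
    exact enorm_sub_le_oscMajorant hd₁ hd₂ hd₂₁ hc₁ hc₂ hc₂₁ h₁.le h₂.le hxp
  exact (eLpNorm_mono_enorm_ae hpt).trans (eLpNorm_oscMajorant_le hc₁.stronglyMeasurable
    hc₂.stronglyMeasurable hc₂₁.stronglyMeasurable one_le_two ENNReal.ofNat_ne_top hε.le)
end
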